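/- arXiv:2501.07795 — 3 statements merged into one kernel-verified Lean document; each statement's English description precedes it below -/
import Mathlib

section
/- Let a_k = A(k+1)^{−η} with constants A ≥ 1 and η ∈ (1/2, 1], let (b_k) be a positive real sequence with b_k = O((k+1)^{−ν}) and b_k = Ω((k+1)^{−ν}) for some ν ∈ [0,1), and let d ≥ 1 be an integer. If moreover ν < d·A^{d−1}/(d + A^{d−1}) − η(d−1), then Σ_{k=0}^{n−1} [∏_{j=k+1}^{n−1} (1 − a_j)^d] a_k^d b_k = Ω(a_n^{d−1} b_n), i.e. liminf_{n→∞} of the sum divided by a_n^{d−1} b_n is strictly positive. -/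
/-!
Write `S n` for the sum and `D n = a n ^ (d - 1) * b n`, so that
`S (n + 1) = (1 - a n) ^ d * S n + a n * D n` and `D n ≍ (n + 1) ^ (-μ)` with
`μ = η (d - 1) + ν < d`. Since `a n ≥ 1 / (n + 1)`, the damping `1 - d a n` of the recursion beats
the relative decay `1 - μ / (n + 1)` of `(n + 1) ^ (-μ)`; hence `K (n + 1) ^ (-μ)` is a
supersolution for large `K` and `c (n + 1) ^ (-μ)` a subsolution for small `c`. A discrete maximum
principle traps `S n` between them, up to an error `O((n + 1) ^ (-d)) = o((n + 1) ^ (-μ))` from the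
initial terms, so `S n / D n` is eventually bounded above and below by positive constants.
-/

open Filter Finset Topology

theorem nonneg_of_mul_le_succ {α : Type*} [Semiring α] [PartialOrder α] [IsOrderedRing α]
    {r E : ℕ → α} {N : ℕ} (hr : ∀ n ≥ N, 0 ≤ r n) (hE : ∀ n ≥ N, r n * E n ≤ E (n + 1))
    (hN : 0 ≤ E N) : ∀ n ≥ N, 0 ≤ E n := by
  intro n hn
  induction n, hn using Nat.le_induction with
  | base => exact hN
  | succ m hm ih => exact (mul_nonneg (hr m hm) ih).trans (hE m hm)

/-- The solution of `S (n + 1) = r n * S n + y n` with `S 0 = 0`. -/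
def discountedSum {R : Type*} [CommSemiring R] (r y : ℕ → R) (n : ℕ) : R :=
  ∑ k ∈ range n, (∏ j ∈ Ico (k + 1) n, r j) * y k

theorem discountedSum_succ {R : Type*} [CommSemiring R] (r y : ℕ → R) (n : ℕ) :
    discountedSum r y (n + 1) = r n * discountedSum r y n + y n := by
  rw [discountedSum, sum_range_succ, Ico_self, prod_empty, one_mul, discountedSum, mul_sum]
  congr 1
  refine sum_congr rfl fun k hk => ?_
  rw [prod_Ico_succ_top (mem_range.mp hk)]
  ring

theorem pow_one_sub_le {x : ℝ} (hx₀ : 0 ≤ x) (hx₁ : x ≤ 1) (n : ℕ) :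
    (1 - x) ^ n ≤ 1 - n * x + (n * x) ^ 2 := by
  have hbern : 1 + n * x ≤ (1 + x) ^ n := one_add_mul_le_pow (by linarith) n
  have hprod : (1 - x) ^ n * (1 + x) ^ n ≤ 1 := by
    rw [← mul_pow]
    exact pow_le_one₀ (by nlinarith) (by nlinarith)
  have hpow : 0 ≤ (1 - x) ^ n := pow_nonneg (by linarith) n
  have hnx : 0 ≤ (n : ℝ) * x := by positivity
  -- `(1 - s + s ^ 2) * (1 + s) = 1 + s ^ 3 ≥ 1`
  nlinarith [mul_le_mul_of_nonneg_left hbern hpow, pow_nonneg hnx 3]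

theorem one_sub_mul_le_rpow_neg {μ t : ℝ} (hμ : 0 ≤ μ) (ht : -1 < t) :
    1 - μ * t ≤ (1 + t) ^ (-μ) := by
  have h : 0 < 1 + t := by linarith
  calc 1 - μ * t = -(μ * t) + 1 := by ring
    _ ≤ Real.exp (-(μ * t)) := Real.add_one_le_exp _
    _ ≤ Real.exp (Real.log (1 + t) * (-μ)) := by
        gcongr
        nlinarith [Real.log_le_sub_one_of_pos h]
    _ = (1 + t) ^ (-μ) := (Real.rpow_def_of_pos h _).symm

theorem one_sub_div_mul_rpow_neg_le {μ x : ℝ} (hμ : 0 ≤ μ) (hx : 0 < x) :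
    (1 - μ / x) * x ^ (-μ) ≤ (x + 1) ^ (-μ) := by
  have hsplit : x + 1 = x * (1 + x⁻¹) := by field_simp
  rw [hsplit, Real.mul_rpow hx.le (by positivity), mul_comm]
  gcongr
  simpa [div_eq_mul_inv] using one_sub_mul_le_rpow_neg hμ (t := x⁻¹) (by linarith [inv_pos.2 hx])

theorem one_sub_mul_mul_rpow_neg_le_succ {μ t : ℝ} (hμ : 0 ≤ μ) {n : ℕ}
    (ht : ((n : ℝ) + 1)⁻¹ ≤ t) :
    (1 - μ * t) * ((n : ℝ) + 1) ^ (-μ) ≤ (((n + 1 : ℕ) : ℝ) + 1) ^ (-μ) := by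
  have hx : (0 : ℝ) < n + 1 := by positivity
  calc (1 - μ * t) * ((n : ℝ) + 1) ^ (-μ) ≤ (1 - μ / ((n : ℝ) + 1)) * ((n : ℝ) + 1) ^ (-μ) := by
        gcongr
        rw [div_eq_mul_inv]
        exact mul_le_mul_of_nonneg_left ht hμ
    _ ≤ (((n + 1 : ℕ) : ℝ) + 1) ^ (-μ) := by
        simpa [add_assoc, one_add_one_eq_two] using one_sub_div_mul_rpow_neg_le hμ hx

theorem pow_one_sub_mul_rpow_neg_le {x t : ℝ} (hx : 0 < x) (ht₀ : 0 ≤ 1 - t)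
    (ht : x⁻¹ ≤ t) (d : ℕ) :
    (1 - t) ^ d * x ^ (-(d : ℝ)) ≤ (x + 1) ^ (-(d : ℝ)) := by
  have hstep : (1 - t) * x⁻¹ ≤ (x + 1)⁻¹ := by
    rw [← div_eq_mul_inv, div_le_iff₀ hx, inv_mul_eq_div, le_div_iff₀ (by linarith)]
    nlinarith [inv_mul_cancel₀ hx.ne', mul_le_mul_of_nonneg_right ht hx.le,
      (inv_pos.2 hx).trans_le ht]
  simp only [Real.rpow_neg (by positivity : (0 : ℝ) ≤ x + 1), Real.rpow_neg hx.le,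
    Real.rpow_natCast, ← inv_pow, ← mul_pow]
  exact pow_le_pow_left₀ (mul_nonneg ht₀ (inv_nonneg.2 hx.le)) hstep d

theorem pow_one_sub_mul_add_le {a D C K μ w w' : ℝ} {d : ℕ} (ha₀ : 0 ≤ a) (ha₁ : a ≤ 1)
    (hsmall : (d : ℝ) ^ 2 * a ≤ (d - μ) / 2) (hK : 0 ≤ K) (hKC : C ≤ K * (d - μ) / 2)
    (hw : 0 ≤ w) (hD : D ≤ C * w) (hw' : (1 - μ * a) * w ≤ w') :
    (1 - a) ^ d * (K * w) + a * D ≤ K * w' := by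
  have hgap : 0 ≤ K * (d - μ) - K * ((d : ℝ) ^ 2 * a) - C := by nlinarith
  calc (1 - a) ^ d * (K * w) + a * D ≤ (1 - d * a + (d * a) ^ 2) * (K * w) + a * (C * w) := by
        gcongr
        exact pow_one_sub_le ha₀ ha₁ d
    _ ≤ K * ((1 - μ * a) * w) := by nlinarith [mul_nonneg (mul_nonneg ha₀ hw) hgap]
    _ ≤ K * w' := by gcongr

theorem le_pow_one_sub_mul_add {a D c w w' : ℝ} {d : ℕ} (ha₀ : 0 ≤ a) (ha₁ : a ≤ 1)
    (hc : 0 ≤ c) (hw : 0 ≤ w) (hD : d * c * w ≤ D) (hw' : w' ≤ w) :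
    c * w' ≤ (1 - a) ^ d * (c * w) + a * D :=
  have hbern : 1 - d * a ≤ (1 - a) ^ d := by
    simpa [sub_eq_add_neg] using one_add_mul_le_pow (by linarith : (-2 : ℝ) ≤ -a) d
  calc c * w' ≤ (1 - d * a) * (c * w) + a * (d * c * w) := by nlinarith
    _ ≤ (1 - a) ^ d * (c * w) + a * D := by gcongr

theorem eventually_mul_rpow_neg_le {μ s : ℝ} (hμs : μ < s) (M : ℝ) {ε : ℝ} (hε : 0 < ε) :
    ∀ᶠ x : ℝ in atTop, M * x ^ (-s) ≤ ε * x ^ (-μ) := by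
  have hlim : Tendsto (fun x : ℝ => M * x ^ (-(s - μ))) atTop (𝓝 0) := by
    simpa using (tendsto_rpow_neg_atTop (sub_pos.2 hμs)).const_mul M
  filter_upwards [hlim.eventually_lt_const hε, eventually_gt_atTop 0] with x hx hx₀
  calc M * x ^ (-s) = M * x ^ (-(s - μ)) * x ^ (-μ) := by
        rw [mul_assoc, ← Real.rpow_add hx₀]; ring_nf
    _ ≤ ε * x ^ (-μ) := by gcongr

theorem tendsto_natCast_add_one_atTop : Tendsto (fun n : ℕ => (n : ℝ) + 1) atTop atTop :=
  tendsto_atTop_add_const_right _ 1 tendsto_natCast_atTop_atTop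

theorem liminf_div_pos_of_bounds {ι : Type*} {l : Filter ι} [l.NeBot] {S D w : ι → ℝ}
    (hw : ∀ i, 0 < w i) (hS_lo : ∃ c > 0, ∀ᶠ i in l, c * w i ≤ S i)
    (hS_up : ∃ K, ∀ᶠ i in l, S i ≤ K * w i) (hD_lo : ∃ c > 0, ∀ᶠ i in l, c * w i ≤ D i)
    (hD_up : ∃ C, ∀ᶠ i in l, D i ≤ C * w i) : 0 < liminf (fun i => S i / D i) l := by
  obtain ⟨c, hc, hSc⟩ := hS_lo
  obtain ⟨K, hSK⟩ := hS_up
  obtain ⟨c', hc', hDc⟩ := hD_lo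
  obtain ⟨C, hDC⟩ := hD_up
  have hC : 0 < max C 1 := lt_max_of_lt_right one_pos
  have hlo : ∀ᶠ i in l, c / max C 1 ≤ S i / D i := by
    filter_upwards [hSc, hDc, hDC] with i hS hD₁ hD₂
    have hD₂' : D i ≤ max C 1 * w i := hD₂.trans (by gcongr; exacts [(hw i).le, le_max_left _ _])
    calc c / max C 1 = c * w i / (max C 1 * w i) := (mul_div_mul_right _ _ (hw i).ne').symm
      _ ≤ S i / D i := div_le_div₀ ((mul_pos hc (hw i)).le.trans hS) hS
          ((mul_pos hc' (hw i)).trans_le hD₁) hD₂'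
  have hup : ∀ᶠ i in l, S i / D i ≤ K / c' := by
    filter_upwards [hSc, hSK, hDc] with i hS₁ hS₂ hD
    calc S i / D i ≤ K * w i / (c' * w i) :=
          div_le_div₀ ((mul_pos hc (hw i)).le.trans (hS₁.trans hS₂)) hS₂ (mul_pos hc' (hw i)) hD
      _ = K / c' := mul_div_mul_right _ _ (hw i).ne'
  -- `liminf` of a sequence unbounded above is the junk value `0`, hence the use of `hup`.
  exact (div_pos hc hC).trans_le
    (le_liminf_of_le (isBoundedUnder_of_eventually_le hup).isCoboundedUnder_ge hlo)

section LinearRecursion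

variable {a D : ℕ → ℝ} {d : ℕ} {μ : ℝ}

theorem exists_discountedSum_le_mul_rpow (hμ : 0 ≤ μ) (hμd : μ < d)
    (ha_ge : ∀ n : ℕ, ((n : ℝ) + 1)⁻¹ ≤ a n) (ha : Tendsto a atTop (𝓝 0))
    (hD : ∃ C, ∀ᶠ n in atTop, D n ≤ C * ((n : ℝ) + 1) ^ (-μ)) :
    ∃ K, ∀ᶠ n in atTop, discountedSum (fun j => (1 - a j) ^ d) (fun k => a k * D k) n ≤
      K * ((n : ℝ) + 1) ^ (-μ) := by
  obtain ⟨C, hC⟩ := hD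
  have ha₀ : ∀ n : ℕ, 0 ≤ a n := fun n => (inv_pos.2 n.cast_add_one_pos).le.trans (ha_ge n)
  set S := discountedSum (fun j => (1 - a j) ^ d) (fun k => a k * D k)
  set w : ℕ → ℝ := fun n => ((n : ℝ) + 1) ^ (-μ)
  set δ : ℝ := d - μ
  have hδ : 0 < δ := sub_pos.2 hμd
  have hsmall : ∀ᶠ n in atTop, a n ≤ 1 ∧ (d : ℝ) ^ 2 * a n ≤ δ / 2 :=
    (ha.eventually_le_const one_pos).and
      ((by simpa using ha.const_mul ((d : ℝ) ^ 2) :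
        Tendsto (fun n => (d : ℝ) ^ 2 * a n) atTop (𝓝 0)).eventually_le_const (half_pos hδ))
  obtain ⟨N, hN⟩ := eventually_atTop.mp (hsmall.and hC)
  set K := max (max 0 (2 * C / δ)) (S N / w N)
  have hK₀ : 0 ≤ K := (le_max_left _ _).trans (le_max_left _ _)
  have hKC : C ≤ K * δ / 2 := by
    have : 2 * C / δ ≤ K := (le_max_right _ _).trans (le_max_left _ _)
    rw [div_le_iff₀ hδ] at this
    linarith
  have hKN : S N ≤ K * w N := (div_le_iff₀ (by positivity)).mp (le_max_right _ _)
  have hstep : ∀ n ≥ N, (1 - a n) ^ d * (K * w n) + a n * D n ≤ K * w (n + 1) := fun n hn =>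
    pow_one_sub_mul_add_le (ha₀ n) (hN n hn).1.1 (hN n hn).1.2 hK₀ hKC (by positivity) (hN n hn).2
      (one_sub_mul_mul_rpow_neg_le_succ hμ (ha_ge n))
  have hnonneg := nonneg_of_mul_le_succ (r := fun j => (1 - a j) ^ d)
    (E := fun n => K * w n - S n) (N := N)
    (fun n hn => pow_nonneg (sub_nonneg.2 (hN n hn).1.1) d)
    (fun n hn => by
      rw [show S (n + 1) = (1 - a n) ^ d * S n + a n * D n from discountedSum_succ _ _ n]
      linarith [hstep n hn])
    (sub_nonneg.2 hKN)
  refine ⟨K, ?_⟩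
  filter_upwards [eventually_ge_atTop N] with n hn
  exact sub_nonneg.1 (hnonneg n hn)

theorem exists_mul_rpow_le_discountedSum (hμ : 0 ≤ μ) (hμd : μ < d)
    (ha_ge : ∀ n : ℕ, ((n : ℝ) + 1)⁻¹ ≤ a n) (ha : Tendsto a atTop (𝓝 0))
    (hD : ∃ c > 0, ∀ᶠ n : ℕ in atTop, c * ((n : ℝ) + 1) ^ (-μ) ≤ D n) :
    ∃ c > 0, ∀ᶠ n : ℕ in atTop, c * ((n : ℝ) + 1) ^ (-μ) ≤
      discountedSum (fun j => (1 - a j) ^ d) (fun k => a k * D k) n := by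
  obtain ⟨c₁, hc₁, hD⟩ := hD
  have ha₀ : ∀ n : ℕ, 0 ≤ a n := fun n => (inv_pos.2 n.cast_add_one_pos).le.trans (ha_ge n)
  set S := discountedSum (fun j => (1 - a j) ^ d) (fun k => a k * D k)
  set w : ℕ → ℝ := fun n => ((n : ℝ) + 1) ^ (-μ)
  set v : ℕ → ℝ := fun n => ((n : ℝ) + 1) ^ (-(d : ℝ))
  have hd : (0 : ℝ) < d := hμ.trans_lt hμd
  obtain ⟨N, hN⟩ := eventually_atTop.mp ((ha.eventually_le_const one_pos).and hD)
  set c := c₁ / d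
  have hc : 0 < c := div_pos hc₁ hd
  have hdc : d * c = c₁ := mul_div_cancel₀ c₁ hd.ne'
  -- `v` is a supersolution of the homogeneous recursion; `M * v` absorbs a possibly negative `S N`.
  set M := |c * w N - S N| / v N
  have hM : 0 ≤ M := by positivity
  have hstep : ∀ n ≥ N, (1 - a n) ^ d * (S n - c * w n + M * v n) ≤
      S (n + 1) - c * w (n + 1) + M * v (n + 1) := by
    intro n hn
    obtain ⟨ha₁, hDn⟩ : a n ≤ 1 ∧ c₁ * w n ≤ D n := hN n hn
    have hx : (0 : ℝ) < n + 1 := n.cast_add_one_pos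
    have hw_succ : w (n + 1) ≤ w n := by
      simp only [w]
      exact Real.rpow_le_rpow_of_nonpos hx (by push_cast; linarith) (neg_nonpos.2 hμ)
    have hv_succ : (1 - a n) ^ d * v n ≤ v (n + 1) := by
      simpa [v, add_assoc, one_add_one_eq_two] using
        pow_one_sub_mul_rpow_neg_le hx (sub_nonneg.2 ha₁) (ha_ge n) d
    have hsub := le_pow_one_sub_mul_add (ha₀ n) ha₁ hc.le (by positivity) (hdc ▸ hDn) hw_succ
    rw [show S (n + 1) = (1 - a n) ^ d * S n + a n * D n from discountedSum_succ _ _ n]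
    linarith [mul_le_mul_of_nonneg_left hv_succ hM]
  have hnonneg := nonneg_of_mul_le_succ (r := fun j => (1 - a j) ^ d)
    (E := fun n => S n - c * w n + M * v n) (N := N)
    (fun n hn => pow_nonneg (sub_nonneg.2 (hN n hn).1) d) hstep
    (by
      have hvN : 0 < v N := by positivity
      simp only [M, div_mul_cancel₀ _ hvN.ne']
      linarith [le_abs_self (c * w N - S N)])
  refine ⟨c / 2, by positivity, ?_⟩
  filter_upwards [eventually_ge_atTop N, tendsto_natCast_add_one_atTop.eventually
    (eventually_mul_rpow_neg_le hμd M (half_pos hc))] with n hn hsmall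
  linarith [hnonneg n hn]

theorem liminf_discountedSum_div_pos (hμ : 0 ≤ μ) (hμd : μ < d)
    (ha_ge : ∀ n : ℕ, ((n : ℝ) + 1)⁻¹ ≤ a n) (ha : Tendsto a atTop (𝓝 0))
    (hD_lo : ∃ c > 0, ∀ᶠ n : ℕ in atTop, c * ((n : ℝ) + 1) ^ (-μ) ≤ D n)
    (hD_up : ∃ C, ∀ᶠ n in atTop, D n ≤ C * ((n : ℝ) + 1) ^ (-μ)) :
    0 < liminf (fun n => discountedSum (fun j => (1 - a j) ^ d) (fun k => a k * D k) n / D n)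
      atTop :=
  liminf_div_pos_of_bounds (fun n => by positivity)
    (exists_mul_rpow_le_discountedSum hμ hμd ha_ge ha hD_lo)
    (exists_discountedSum_le_mul_rpow hμ hμd ha_ge ha hD_up) hD_lo hD_up

end LinearRecursion

theorem mul_rpow_neg_pow_mul_mul_rpow_neg {x : ℝ} (hx : 0 < x) (A C η ν : ℝ) (m : ℕ) :
    (A * x ^ (-η)) ^ m * (C * x ^ (-ν)) = A ^ m * C * x ^ (-(η * m + ν)) := by
  rw [mul_pow, ← Real.rpow_natCast (x ^ (-η)), ← Real.rpow_mul hx.le, neg_add, neg_mul,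
    Real.rpow_add hx]
  ring

theorem inv_le_mul_rpow_neg {A η x : ℝ} (hA : 1 ≤ A) (hη : η ≤ 1) (hx : 1 ≤ x) :
    x⁻¹ ≤ A * x ^ (-η) := by
  rw [← Real.rpow_neg_one]
  calc x ^ (-1 : ℝ) ≤ x ^ (-η) := Real.rpow_le_rpow_of_exponent_le hx (by linarith)
    _ ≤ A * x ^ (-η) := le_mul_of_one_le_left (by positivity) hA

theorem sum_prod_mul_pow_mul_eq_discountedSum {R : Type*} [CommSemiring R] (r a b : ℕ → R)
    {d : ℕ} (hd : 1 ≤ d) (n : ℕ) :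
    ∑ k ∈ range n, (∏ j ∈ Ico (k + 1) n, r j) * a k ^ d * b k =
      discountedSum r (fun k => a k * (a k ^ (d - 1) * b k)) n :=
  sum_congr rfl fun k _ => by
    dsimp only
    rw [mul_assoc, ← mul_assoc (a k), ← pow_succ', Nat.sub_add_cancel hd]

theorem sum_prod_step_bigOmega_general (A η ν : ℝ) (hA : 1 ≤ A) (hη₁ : 1 / 2 < η) (hη₂ : η ≤ 1)
    (hν₀ : 0 ≤ ν) (hν₁ : ν < 1) (a b : ℕ → ℝ)
    (ha : ∀ k : ℕ, a k = A * ((k : ℝ) + 1) ^ (-η))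
    (hbO : ∃ C : ℝ, ∀ᶠ k : ℕ in atTop, b k ≤ C * ((k : ℝ) + 1) ^ (-ν))
    (hbΩ : ∃ c : ℝ, 0 < c ∧ ∀ᶠ k : ℕ in atTop, c * ((k : ℝ) + 1) ^ (-ν) ≤ b k)
    (d : ℕ) (hd : 1 ≤ d) :
    0 < Filter.liminf (fun n : ℕ =>
        (∑ k ∈ Finset.range n,
          (∏ j ∈ Finset.Ico (k + 1) n, (1 - a j) ^ d) * a k ^ d * b k) /
        (a n ^ (d - 1) * b n)) atTop := by
  set μ := η * ((d - 1 : ℕ) : ℝ) + ν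
  have hμd : μ < d := by
    have : ((d - 1 : ℕ) : ℝ) + 1 = d := by rw [Nat.cast_sub hd, Nat.cast_one, sub_add_cancel]
    nlinarith [Nat.cast_nonneg (α := ℝ) (d - 1)]
  have ha₀ : ∀ n, 0 ≤ a n := fun n => by rw [ha n]; positivity
  have ha_ge : ∀ n : ℕ, ((n : ℝ) + 1)⁻¹ ≤ a n := fun n =>
    (ha n).symm ▸ inv_le_mul_rpow_neg hA hη₂ (by simp)
  have ha_lim : Tendsto a atTop (𝓝 0) := by
    simpa [funext ha] using
      ((tendsto_rpow_neg_atTop (by linarith)).comp tendsto_natCast_add_one_atTop).const_mul A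
  have hD : ∀ (C : ℝ) (n : ℕ),
      a n ^ (d - 1) * (C * ((n : ℝ) + 1) ^ (-ν)) = A ^ (d - 1) * C * ((n : ℝ) + 1) ^ (-μ) :=
    fun C n => by rw [ha n, mul_rpow_neg_pow_mul_mul_rpow_neg (by positivity)]
  obtain ⟨c, hc, hcb⟩ := hbΩ
  obtain ⟨C, hCb⟩ := hbO
  rw [funext fun n => congrArg (· / _) (sum_prod_mul_pow_mul_eq_discountedSum _ a b hd n)]
  refine liminf_discountedSum_div_pos (by positivity) hμd ha_ge ha_lim
    ⟨A ^ (d - 1) * c, by positivity, hcb.mono fun n hn => ?_⟩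
    ⟨A ^ (d - 1) * C, hCb.mono fun n hn => ?_⟩
  · exact hD c n ▸ mul_le_mul_of_nonneg_left hn (pow_nonneg (ha₀ n) _)
  · exact hD C n ▸ mul_le_mul_of_nonneg_left hn (pow_nonneg (ha₀ n) _)

/-- refinement of Lemma 3 of Hu et al., lower bound. Let
`a_k = A(k+1)^{−η}` with `A ≥ 1`, `η ∈ (1/2,1]`, let `(b_k)` be positive with
`b_k = O((k+1)^{−ν})` and `b_k = Ω((k+1)^{−ν})` for some `ν ∈ [0,1)`, and let `d ≥ 1`
be an integer.  If moreover `ν < d·A^{d−1}/(d + A^{d−1}) − η(d−1)`, then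
`Σ_{k=0}^{n−1} [∏_{j=k+1}^{n−1} (1 − a_j)^d] a_k^d b_k = Ω(a_n^{d−1} b_n)`, i.e. the
liminf of the sum divided by `a_n^{d−1} b_n` is strictly positive. -/
theorem sum_prod_step_bigOmega (A η ν : ℝ) (hA : 1 ≤ A) (hη₁ : 1 / 2 < η) (hη₂ : η ≤ 1)
    (hν₀ : 0 ≤ ν) (hν₁ : ν < 1) (a b : ℕ → ℝ)
    (ha : ∀ k : ℕ, a k = A * ((k : ℝ) + 1) ^ (-η))
    (hb_pos : ∀ k, 0 < b k)
    (hbO : ∃ C : ℝ, ∀ᶠ k : ℕ in atTop, b k ≤ C * ((k : ℝ) + 1) ^ (-ν))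
    (hbΩ : ∃ c : ℝ, 0 < c ∧ ∀ᶠ k : ℕ in atTop, c * ((k : ℝ) + 1) ^ (-ν) ≤ b k)
    (d : ℕ) (hd : 1 ≤ d)
    (hν' : ν < (d : ℝ) * A ^ (d - 1) / ((d : ℝ) + A ^ (d - 1)) - η * ((d : ℝ) - 1)) :
    0 < Filter.liminf (fun n : ℕ =>
        (∑ k ∈ Finset.range n,
          (∏ j ∈ Finset.Ico (k + 1) n, (1 - a j) ^ d) * a k ^ d * b k) /
        (a n ^ (d - 1) * b n)) atTop :=
  sum_prod_step_bigOmega_general A η ν hA hη₁ hη₂ hν₀ hν₁ a b ha hbO hbΩ d hd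
end

section
/- Under the black-box model assumptions and the algorithm's step-size conditions, define for step size γ ∈ (0,1): m(t) := ⌊t/γ⌋, U^γ_k := (μ_k − μ*)/√γ, and ρ^γ(t,s) := [t + s − γ·m(t+s)]·U^γ_{m(t+s)}. Then for any fixed T > 0, t > 0 and s ∈ [0,T], ρ^γ(t,s) converges to 0 in probability as γ ↘ 0. -/
open MeasureTheory ProbabilityTheory Filter
open scoped Topology ENNReal NNReal RealInnerProductSpace

/-- The black-box model together with one run of the SPSA-with-statistical-inference
algorithm (Algorithm 1), excluding the performance/variance recursions (which depend on
the constant step size `γ` and are defined separately). -/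
structure BlackBoxSPSA (p : ℕ) where
  p_pos : 0 < p
  /-- the feasible region -/
  feas : Set (EuclideanSpace ℝ (Fin p))
  feas_compact : IsCompact feas
  feas_convex : Convex ℝ feas
  /-- `Θ` is defined by finitely many continuously differentiable convex inequality
  constraints -/
  feas_constraints : ∃ (m : ℕ) (h : Fin m → EuclideanSpace ℝ (Fin p) → ℝ),
      (∀ j, ContDiff ℝ 1 (h j)) ∧ (∀ j, ConvexOn ℝ Set.univ (h j)) ∧
      feas = {x | ∀ j, h j x ≤ 0}
  /-- the expected performance `μ` -/
  obj : EuclideanSpace ℝ (Fin p) → ℝ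
  /-- the standard deviation `σ` -/
  noiseScale : EuclideanSpace ℝ (Fin p) → ℝ
  obj_smooth : ContDiff ℝ 3 obj
  obj_strongConvex : ∃ m : ℝ, 0 < m ∧ StrongConvexOn feas m obj
  /-- the minimizer `θ*` -/
  minimizer : EuclideanSpace ℝ (Fin p)
  minimizer_mem : minimizer ∈ interior feas
  minimizer_isMinOn : ∀ θ ∈ feas, obj minimizer ≤ obj θ
  minimizer_unique : ∀ θ ∈ feas, obj θ = obj minimizer → θ = minimizer
  noiseScale_nonneg : ∀ θ, 0 ≤ noiseScale θ
  noiseScale_smooth : ContDiff ℝ 2 noiseScale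
  /-- the batch size `τ` -/
  τ : ℕ
  τ_pos : 0 < τ
  /-- the optimization step sizes `a_k` -/
  a : ℕ → ℝ
  /-- the perturbation sizes `c_k` -/
  c : ℕ → ℝ
  a_pos : ∀ k, 0 < a k
  c_pos : ∀ k, 0 < c k
  a_not_summable : ¬ Summable a
  a_sq_summable : Summable (fun k => a k ^ 2)
  c_tendsto_zero : Tendsto c atTop (𝓝 0)
  ac_sq_summable : Summable (fun k => a k * c k ^ 2)
  asq_div_csq_summable : Summable (fun k => a k ^ 2 / c k ^ 2)
  /-- the underlying probability space -/
  (Ω : Type) [mΩ : MeasurableSpace Ω] (P : Measure Ω) [P_prob : IsProbabilityMeasure P]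
  /-- the uniform (i.e. rotation-invariant) probability distribution on the unit sphere -/
  (sphereUnif : Measure (EuclideanSpace ℝ (Fin p)))
  [sphereUnif_prob : IsProbabilityMeasure sphereUnif]
  sphereUnif_support : sphereUnif {x | ‖x‖ = 1}ᶜ = 0
  sphereUnif_invariant :
    ∀ R : EuclideanSpace ℝ (Fin p) ≃ₗᵢ[ℝ] EuclideanSpace ℝ (Fin p),
      Measure.map R sphereUnif = sphereUnif
  /-- the random directions `u_k` -/
  u : ℕ → Ω → EuclideanSpace ℝ (Fin p)
  u_meas : ∀ k, Measurable (u k)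
  /-- each `u_k` is uniformly distributed on the unit sphere -/
  u_law : ∀ k, Measure.map (u k) P = sphereUnif
  /-- the `u_k` are independent -/
  u_iid : iIndepFun u P
  /-- the batch-averaged noises of the `+` and `-` perturbation samples -/
  εp : ℕ → Ω → ℝ
  εm : ℕ → Ω → ℝ
  εp_meas : ∀ k, Measurable (εp k)
  εm_meas : ∀ k, Measurable (εm k)
  /-- the filtration of information available at the start of iteration `k`,
  including the direction `u_k` -/
  ℱ : ℕ → MeasurableSpace Ω
  ℱ_le : ∀ k, ℱ k ≤ mΩ
  ℱ_mono : Monotone ℱ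
  u_adapted : ∀ k, Measurable[ℱ k] (u k)
  /-- the parameter-vector iterates `θ_k` -/
  θ : ℕ → Ω → EuclideanSpace ℝ (Fin p)
  θ_meas : ∀ k, Measurable (θ k)
  θ_adapted : ∀ k, Measurable[ℱ k] (θ k)
  θ_init_mem : ∀ ω, θ 0 ω ∈ feas
  /-- `u_k` is drawn independently of the current iterate -/
  u_indep_θ : ∀ k, IndepFun (u k) (θ k) P
  εp_int : ∀ k, Integrable (εp k) P
  εm_int : ∀ k, Integrable (εm k) P
  εp_sq_int : ∀ k, Integrable (fun ω => εp k ω ^ 2) P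
  εm_sq_int : ∀ k, Integrable (fun ω => εm k ω ^ 2) P
  /-- each batch noise is a conditional-mean-zero average of `τ` conditionally
  independent mean-zero unit-variance noises: conditional mean `0` -/
  εp_cond_mean : ∀ k, P[εp k|ℱ k] =ᵐ[P] 0
  εm_cond_mean : ∀ k, P[εm k|ℱ k] =ᵐ[P] 0
  /-- conditional variance `1/τ` -/
  εp_cond_var : ∀ k, P[fun ω => εp k ω ^ 2|ℱ k] =ᵐ[P] fun _ => 1 / (τ : ℝ)
  εm_cond_var : ∀ k, P[fun ω => εm k ω ^ 2|ℱ k] =ᵐ[P] fun _ => 1 / (τ : ℝ)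
  /-- the two perturbation batches are conditionally uncorrelated -/
  ε_cond_uncorr : ∀ k, P[fun ω => εp k ω * εm k ω|ℱ k] =ᵐ[P] 0
  /-- the batch means of the observations at `θ_k ± c_k u_k` -/
  yp : ℕ → Ω → ℝ
  ym : ℕ → Ω → ℝ
  yp_def : ∀ k ω, yp k ω =
    obj (θ k ω + c k • u k ω) + noiseScale (θ k ω + c k • u k ω) * εp k ω
  ym_def : ∀ k ω, ym k ω =
    obj (θ k ω - c k • u k ω) + noiseScale (θ k ω - c k • u k ω) * εm k ω
  /-- the Euclidean projection onto the feasible region -/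
  proj : EuclideanSpace ℝ (Fin p) → EuclideanSpace ℝ (Fin p)
  proj_mem : ∀ x, proj x ∈ feas
  proj_isProj : ∀ x, ∀ y ∈ feas, ‖x - proj x‖ ≤ ‖x - y‖
  /-- the projected SPSA recursion `θ_{k+1} = Π_Θ[θ_k − a_k g_k]` with
  `g_k = ((y_k⁺ − y_k⁻)/(2 c_k)) u_k` -/
  θ_rec : ∀ k ω,
    θ (k + 1) ω = proj (θ k ω - (a k * ((yp k ω - ym k ω) / (2 * c k))) • u k ω)

attribute [instance] BlackBoxSPSA.mΩ BlackBoxSPSA.P_prob BlackBoxSPSA.sphereUnif_prob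

namespace BlackBoxSPSA

variable {p : ℕ}

/-- the batch performance estimate `ȳ_k = (y_k⁺ + y_k⁻)/2` -/
noncomputable def ybar (M : BlackBoxSPSA p) (k : ℕ) (ω : M.Ω) : ℝ :=
  (M.yp k ω + M.ym k ω) / 2

/-- the exponentially smoothed performance estimates
`μ_{k+1} = μ_k + γ (ȳ_k − μ_k)`, started at `μ₀`. -/
noncomputable def muSeq (M : BlackBoxSPSA p) (γ μ0 : ℝ) : ℕ → M.Ω → ℝ
  | 0 => fun _ => μ0
  | k + 1 => fun ω => M.muSeq γ μ0 k ω + γ * (M.ybar k ω - M.muSeq γ μ0 k ω)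

/-- the variance estimates `v_{k+1} = v_k + (1/(k+1))[(ȳ_k − μ_k)² − v_k]`,
started at `v₀`. -/
noncomputable def vSeq (M : BlackBoxSPSA p) (γ μ0 v0 : ℝ) : ℕ → M.Ω → ℝ
  | 0 => fun _ => v0
  | k + 1 => fun ω => M.vSeq γ μ0 v0 k ω +
      (1 / ((k : ℝ) + 1)) * ((M.ybar k ω - M.muSeq γ μ0 k ω) ^ 2 - M.vSeq γ μ0 v0 k ω)

end BlackBoxSPSA


/-! Since `μ_{k+1} = (1 - γ) μ_k + γ ȳ_k` is a convex combination, `E|μ_k|` is bounded by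
`max(|μ₀|, sup_k E|ȳ_k|)`, uniformly in `γ` and `k`; and `E|ȳ_k|` is bounded because the
iterates stay in the compact set `Θ` and the noises have conditional variance `1/τ`.
The prefactor `t + s - γ m(t + s)` lies in `[0, γ]`, so `E|ρ^γ(t, s)| = O(√γ)`, and
Markov's inequality concludes. -/

section General

variable {Ω : Type*} {mΩ : MeasurableSpace Ω} {μ : Measure Ω}

lemma abs_sub_mul_floor_div_le {x γ : ℝ} (hx : 0 ≤ x) (hγ : 0 < γ) :
    |x - γ * ⌊x / γ⌋₊| ≤ γ := by
  have hle : γ * ⌊x / γ⌋₊ ≤ x := (le_div_iff₀' hγ).1 (Nat.floor_le (by positivity))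
  have hlt : x < γ * (⌊x / γ⌋₊ + 1) := (div_lt_iff₀' hγ).1 (Nat.lt_floor_add_one _)
  rw [abs_of_nonneg (sub_nonneg.2 hle)]
  linarith

lemma abs_mul_div_sqrt_le {a z γ : ℝ} (ha : |a| ≤ γ) (hγ : 0 < γ) :
    |a * (z / √γ)| ≤ √γ * |z| := by
  have hsqrt : 0 < √γ := Real.sqrt_pos.2 hγ
  calc |a * (z / √γ)| = |a| * |z| / √γ := by
        rw [abs_mul, abs_div, abs_of_pos hsqrt, mul_div_assoc]
    _ ≤ γ * |z| / √γ := by gcongr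
    _ = √γ * |z| := by rw [mul_div_right_comm, Real.div_sqrt]

lemma integral_eq_of_condExp_ae_eq_const [IsProbabilityMeasure μ] {m : MeasurableSpace Ω}
    (hm : m ≤ mΩ) {f : Ω → ℝ} {c : ℝ} (hf : μ[f|m] =ᵐ[μ] fun _ => c) :
    ∫ ω, f ω ∂μ = c := by
  rw [← integral_condExp hm, integral_congr_ae hf, integral_const, probReal_univ, smul_eq_mul,
    one_mul]

lemma integral_abs_le_one_add_integral_sq [IsProbabilityMeasure μ] {f : Ω → ℝ}
    (hf : Integrable f μ) (hf2 : Integrable (fun ω => f ω ^ 2) μ) :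
    ∫ ω, |f ω| ∂μ ≤ 1 + ∫ ω, f ω ^ 2 ∂μ := by
  have hpt (x : ℝ) : |x| ≤ 1 + x ^ 2 := by
    nlinarith [sq_nonneg (|x| - 1), sq_abs x]
  calc ∫ ω, |f ω| ∂μ ≤ ∫ ω, (1 + f ω ^ 2) ∂μ :=
        integral_mono hf.abs ((integrable_const 1).add hf2) fun ω => hpt (f ω)
    _ = 1 + ∫ ω, f ω ^ 2 ∂μ := by
        rw [integral_add (integrable_const 1) hf2, integral_const, probReal_univ, one_smul]

lemma integrable_add_mul_and_integral_abs_le [IsProbabilityMeasure μ] {a b e : Ω → ℝ} {C : ℝ}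
    (ha : AEStronglyMeasurable a μ) (hb : AEStronglyMeasurable b μ) (he : Integrable e μ)
    (haC : ∀ᵐ ω ∂μ, |a ω| ≤ C) (hbC : ∀ᵐ ω ∂μ, |b ω| ≤ C) :
    Integrable (fun ω => a ω + b ω * e ω) μ ∧
      ∫ ω, |a ω + b ω * e ω| ∂μ ≤ C + C * ∫ ω, |e ω| ∂μ := by
  have hbound : Integrable (fun ω => C + C * |e ω|) μ :=
    (integrable_const C).add (he.abs.const_mul C)
  have hint : Integrable (fun ω => a ω + b ω * e ω) μ :=
    (Integrable.of_bound ha C haC).add (he.bdd_mul hb hbC)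
  refine ⟨hint, ?_⟩
  calc ∫ ω, |a ω + b ω * e ω| ∂μ ≤ ∫ ω, (C + C * |e ω|) ∂μ := by
        refine integral_mono_ae hint.abs hbound ?_
        filter_upwards [haC, hbC] with ω haω hbω
        calc |a ω + b ω * e ω| ≤ |a ω| + |b ω| * |e ω| := by
              rw [← abs_mul]; exact abs_add_le _ _
          _ ≤ C + C * |e ω| := by gcongr
    _ = C + C * ∫ ω, |e ω| ∂μ := by
        rw [integral_add (integrable_const C) (he.abs.const_mul C), integral_const_mul,
          integral_const, probReal_univ, one_smul]

lemma integral_abs_le_max_of_smoothing {x y : ℕ → Ω → ℝ} {γ B : ℝ} (hγ0 : 0 ≤ γ)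
    (hγ1 : γ ≤ 1) (hrec : ∀ n ω, x (n + 1) ω = x n ω + γ * (y n ω - x n ω))
    (hx0 : Integrable (x 0) μ) (hy : ∀ n, Integrable (y n) μ)
    (hyB : ∀ n, ∫ ω, |y n ω| ∂μ ≤ B) (n : ℕ) :
    Integrable (x n) μ ∧ ∫ ω, |x n ω| ∂μ ≤ max (∫ ω, |x 0 ω| ∂μ) B := by
  induction n with
  | zero => exact ⟨hx0, le_max_left _ _⟩
  | succ n ih =>
    obtain ⟨hxn, hxnB⟩ := ih
    have hconv : x (n + 1) = fun ω => (1 - γ) * x n ω + γ * y n ω := by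
      funext ω; rw [hrec]; ring
    have hint_abs : Integrable (fun ω => (1 - γ) * |x n ω| + γ * |y n ω|) μ :=
      (hxn.abs.const_mul _).add ((hy n).abs.const_mul _)
    have hint : Integrable (x (n + 1)) μ := by
      rw [hconv]; exact (hxn.const_mul _).add ((hy n).const_mul _)
    refine ⟨hint, ?_⟩
    calc ∫ ω, |x (n + 1) ω| ∂μ ≤ ∫ ω, ((1 - γ) * |x n ω| + γ * |y n ω|) ∂μ := by
          refine integral_mono hint.abs hint_abs fun ω => ?_
          rw [hconv]
          calc |(1 - γ) * x n ω + γ * y n ω| ≤ |(1 - γ) * x n ω| + |γ * y n ω| :=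
                abs_add_le _ _
            _ = (1 - γ) * |x n ω| + γ * |y n ω| := by
                rw [abs_mul, abs_mul, abs_of_nonneg (sub_nonneg.2 hγ1), abs_of_nonneg hγ0]
      _ = (1 - γ) * ∫ ω, |x n ω| ∂μ + γ * ∫ ω, |y n ω| ∂μ := by
          rw [integral_add (hxn.abs.const_mul _) ((hy n).abs.const_mul _), integral_const_mul,
            integral_const_mul]
      _ ≤ (1 - γ) * max (∫ ω, |x 0 ω| ∂μ) B + γ * max (∫ ω, |x 0 ω| ∂μ) B := by
          have : 0 ≤ 1 - γ := sub_nonneg.2 hγ1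
          gcongr
          exact (hyB n).trans (le_max_right _ _)
      _ = max (∫ ω, |x 0 ω| ∂μ) B := by ring

lemma tendsto_measure_le_abs_of_integral_abs_le [IsFiniteMeasure μ] {ι : Type*} {l : Filter ι}
    {X : ι → Ω → ℝ} {g : ι → ℝ} (hX : ∀ᶠ i in l, Integrable (X i) μ)
    (hXg : ∀ᶠ i in l, ∫ ω, |X i ω| ∂μ ≤ g i) (hg : Tendsto g l (𝓝 0)) {ε : ℝ} (hε : 0 < ε) :
    Tendsto (fun i => μ {ω | ε ≤ |X i ω|}) l (𝓝 0) := by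
  have hreal : Tendsto (fun i => μ.real {ω | ε ≤ |X i ω|}) l (𝓝 0) := by
    refine squeeze_zero' (Eventually.of_forall fun i => measureReal_nonneg)
      ?_ (by simpa using hg.div_const ε)
    filter_upwards [hX, hXg] with i hi hig
    rw [le_div_iff₀' hε]
    exact (mul_meas_ge_le_integral_of_nonneg (Eventually.of_forall fun ω => abs_nonneg _)
      hi.abs ε).trans hig
  simpa [← ofReal_measureReal] using ENNReal.tendsto_ofReal hreal

end General

namespace BlackBoxSPSA

open Pointwise

variable {p : ℕ} (M : BlackBoxSPSA p)

lemma θ_mem_feas (k : ℕ) (ω : M.Ω) : M.θ k ω ∈ M.feas := by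
  cases k with
  | zero => exact M.θ_init_mem ω
  | succ k => rw [M.θ_rec]; exact M.proj_mem _

lemma norm_u_eq_one_ae (k : ℕ) : ∀ᵐ ω ∂M.P, ‖M.u k ω‖ = 1 := by
  have hmeas : MeasurableSet {x : EuclideanSpace ℝ (Fin p) | ‖x‖ = 1} :=
    measurableSet_eq_fun (by fun_prop) measurable_const
  have hnull : M.P (M.u k ⁻¹' {x | ‖x‖ = 1}ᶜ) = 0 := by
    rw [← Measure.map_apply (M.u_meas k) hmeas.compl, M.u_law]
    exact M.sphereUnif_support
  filter_upwards [measure_eq_zero_iff_ae_notMem.mp hnull] with ω h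
  simpa using h

lemma exists_isCompact_forall_θ_add_mem :
    ∃ K, IsCompact K ∧ ∀ k ω (v : EuclideanSpace ℝ (Fin p)), ‖v‖ ≤ M.c k → M.θ k ω + v ∈ K := by
  obtain ⟨R, hR⟩ := M.c_tendsto_zero.bddAbove_range
  refine ⟨M.feas + Metric.closedBall 0 R, M.feas_compact.add (isCompact_closedBall _ _),
    fun k ω v hv => Set.add_mem_add (M.θ_mem_feas k ω) ?_⟩
  rw [mem_closedBall_zero_iff]
  exact hv.trans (hR (Set.mem_range_self k))

lemma exists_integral_abs_observation_le : ∃ C, 0 ≤ C ∧ ∀ (k : ℕ) (v : M.Ω → EuclideanSpace ℝ (Fin p))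
    (e y : M.Ω → ℝ), Measurable v → (∀ᵐ ω ∂M.P, ‖v ω‖ ≤ M.c k) → Integrable e M.P →
    (∀ ω, y ω = M.obj (M.θ k ω + v ω) + M.noiseScale (M.θ k ω + v ω) * e ω) →
    Integrable y M.P ∧ ∫ ω, |y ω| ∂M.P ≤ C + C * ∫ ω, |e ω| ∂M.P := by
  obtain ⟨K, hK, hmem⟩ := M.exists_isCompact_forall_θ_add_mem
  obtain ⟨C₁, hC₁⟩ := hK.exists_bound_of_continuousOn M.obj_smooth.continuous.continuousOn
  obtain ⟨C₂, hC₂⟩ := hK.exists_bound_of_continuousOn M.noiseScale_smooth.continuous.continuousOn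
  refine ⟨max (max C₁ C₂) 0, le_max_right _ _, fun k v e y hv hvc he hy => ?_⟩
  obtain rfl : y = _ := funext hy
  have hpt : Measurable fun ω => M.θ k ω + v ω := (M.θ_meas k).add hv
  refine integrable_add_mul_and_integral_abs_le
    (M.obj_smooth.continuous.measurable.comp hpt).aestronglyMeasurable
    (M.noiseScale_smooth.continuous.measurable.comp hpt).aestronglyMeasurable he ?_ ?_
  · filter_upwards [hvc] with ω hω
    exact (hC₁ _ (hmem k ω _ hω)).trans ((le_max_left _ _).trans (le_max_left _ _))
  · filter_upwards [hvc] with ω hω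
    exact (hC₂ _ (hmem k ω _ hω)).trans ((le_max_right _ _).trans (le_max_left _ _))

lemma integral_abs_εp_le (k : ℕ) : ∫ ω, |M.εp k ω| ∂M.P ≤ 1 + 1 / (M.τ : ℝ) :=
  (integral_abs_le_one_add_integral_sq (M.εp_int k) (M.εp_sq_int k)).trans_eq
    (by rw [integral_eq_of_condExp_ae_eq_const (M.ℱ_le k) (M.εp_cond_var k)])

lemma integral_abs_εm_le (k : ℕ) : ∫ ω, |M.εm k ω| ∂M.P ≤ 1 + 1 / (M.τ : ℝ) :=
  (integral_abs_le_one_add_integral_sq (M.εm_int k) (M.εm_sq_int k)).trans_eq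
    (by rw [integral_eq_of_condExp_ae_eq_const (M.ℱ_le k) (M.εm_cond_var k)])

lemma exists_integral_abs_ybar_le :
    ∃ B, ∀ k, Integrable (M.ybar k) M.P ∧ ∫ ω, |M.ybar k ω| ∂M.P ≤ B := by
  obtain ⟨C, hC0, hC⟩ := M.exists_integral_abs_observation_le
  refine ⟨C + C * (1 + 1 / (M.τ : ℝ)), fun k => ?_⟩
  have hnorm : ∀ᵐ ω ∂M.P, ‖M.c k • M.u k ω‖ ≤ M.c k := by
    filter_upwards [M.norm_u_eq_one_ae k] with ω hω
    rw [norm_smul, hω, mul_one, Real.norm_of_nonneg (M.c_pos k).le]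
  have huc : Measurable fun ω => M.c k • M.u k ω := (M.u_meas k).const_smul (M.c k)
  obtain ⟨hp_int, hp_le⟩ := hC k _ _ _ huc hnorm (M.εp_int k) (M.yp_def k)
  obtain ⟨hm_int, hm_le⟩ := hC k (fun ω => -(M.c k • M.u k ω)) _ (M.ym k) huc.neg
    (by simpa only [norm_neg] using hnorm) (M.εm_int k)
    (fun ω => by rw [M.ym_def, sub_eq_add_neg])
  have hint : Integrable (M.ybar k) M.P := (hp_int.add hm_int).div_const 2
  refine ⟨hint, ?_⟩
  calc ∫ ω, |M.ybar k ω| ∂M.P ≤ ∫ ω, (|M.yp k ω| + |M.ym k ω|) / 2 ∂M.P := by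
        refine integral_mono hint.abs ((hp_int.abs.add hm_int.abs).div_const 2) fun ω => ?_
        rw [ybar, abs_div, abs_two]
        gcongr
        exact abs_add_le _ _
    _ = (∫ ω, |M.yp k ω| ∂M.P + ∫ ω, |M.ym k ω| ∂M.P) / 2 := by
        rw [integral_div, integral_add hp_int.abs hm_int.abs]
    _ ≤ (C + C * (1 + 1 / (M.τ : ℝ)) + (C + C * (1 + 1 / (M.τ : ℝ)))) / 2 := by
        gcongr
        · exact hp_le.trans (by gcongr; exact M.integral_abs_εp_le k)
        · exact hm_le.trans (by gcongr; exact M.integral_abs_εm_le k)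
    _ = C + C * (1 + 1 / (M.τ : ℝ)) := by ring

lemma exists_integral_abs_muSeq_le : ∃ D, ∀ (μ0 γ : ℝ), 0 ≤ γ → γ ≤ 1 → ∀ k,
    Integrable (M.muSeq γ μ0 k) M.P ∧ ∫ ω, |M.muSeq γ μ0 k ω| ∂M.P ≤ max |μ0| D := by
  obtain ⟨B, hB⟩ := M.exists_integral_abs_ybar_le
  refine ⟨B, fun μ0 γ hγ0 hγ1 k => ?_⟩
  have h := integral_abs_le_max_of_smoothing (x := M.muSeq γ μ0) hγ0 hγ1 (fun _ _ => rfl)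
    (integrable_const μ0) (fun n => (hB n).1) (fun n => (hB n).2) k
  simpa [muSeq] using h

end BlackBoxSPSA

theorem rho_tendsto_zero_in_probability_general {p : ℕ} (M : BlackBoxSPSA p) (μ0 : ℝ)
    (T t s : ℝ) (ht : 0 < t) (hs : s ∈ Set.Icc (0 : ℝ) T) :
    ∀ ε > 0,
      Tendsto
        (fun γ : ℝ => M.P {ω | ε ≤
          |(t + s - γ * (⌊(t + s) / γ⌋₊ : ℝ)) *
            ((M.muSeq γ μ0 ⌊(t + s) / γ⌋₊ ω - M.obj M.minimizer) / Real.sqrt γ)|})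
        (𝓝[Set.Ioo (0 : ℝ) 1] 0) (𝓝 0) := by
  intro ε hε
  obtain ⟨D, hD⟩ := M.exists_integral_abs_muSeq_le
  set μstar := M.obj M.minimizer
  have hts : 0 ≤ t + s := by linarith [hs.1]
  have hsqrt : Tendsto (fun γ : ℝ => √γ * (max |μ0| D + |μstar|)) (𝓝[Set.Ioo 0 1] 0) (𝓝 0) := by
    simpa using ((Real.continuous_sqrt.tendsto 0).mul_const _).mono_left nhdsWithin_le_nhds
  refine tendsto_measure_le_abs_of_integral_abs_le ?_ ?_ hsqrt hε
  · filter_upwards [self_mem_nhdsWithin] with γ ⟨hγ0, hγ1⟩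
    exact (((hD μ0 γ hγ0.le hγ1.le _).1.sub (integrable_const _)).div_const _).const_mul _
  · filter_upwards [self_mem_nhdsWithin] with γ ⟨hγ0, hγ1⟩
    obtain ⟨hint, hle⟩ := hD μ0 γ hγ0.le hγ1.le ⌊(t + s) / γ⌋₊
    calc _ ≤ ∫ ω, √γ * (|M.muSeq γ μ0 ⌊(t + s) / γ⌋₊ ω| + |μstar|) ∂M.P := by
          refine integral_mono (((hint.sub (integrable_const _)).div_const _).const_mul _).abs
            ((hint.abs.add (integrable_const _)).const_mul _) fun ω => ?_
          exact (abs_mul_div_sqrt_le (abs_sub_mul_floor_div_le hts hγ0) hγ0).trans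
            (by gcongr; exact abs_sub _ _)
      _ ≤ √γ * (max |μ0| D + |μstar|) := by
          rw [integral_const_mul, integral_add hint.abs (integrable_const _), integral_const,
            probReal_univ, one_smul]
          gcongr

/-- With `m(t) := ⌊t/γ⌋`, `U^γ_k := (μ_k − μ*)/√γ` and
`ρ^γ(t,s) := [t + s − γ·m(t+s)]·U^γ_{m(t+s)}`, for any fixed `T > 0`, `t > 0` and
`s ∈ [0,T]`, `ρ^γ(t,s)` converges to `0` in probability as `γ ↘ 0`. -/
theorem rho_tendsto_zero_in_probability {p : ℕ} (M : BlackBoxSPSA p) (μ0 : ℝ)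
    (T t s : ℝ) (hT : 0 < T) (ht : 0 < t) (hs : s ∈ Set.Icc (0 : ℝ) T) :
    ∀ ε > 0,
      Tendsto
        (fun γ : ℝ => M.P {ω | ε ≤
          |(t + s - γ * (⌊(t + s) / γ⌋₊ : ℝ)) *
            ((M.muSeq γ μ0 ⌊(t + s) / γ⌋₊ ω - M.obj M.minimizer) / Real.sqrt γ)|})
        (𝓝[Set.Ioo (0 : ℝ) 1] 0) (𝓝 0) :=
  rho_tendsto_zero_in_probability_general M μ0 T t s ht hs
end

section
/- Let μ : ℝ^p → ℝ be three times continuously differentiable and let Θ ⊂ ℝ^p be compact. Then there exists a constant K > 0 such that for every θ ∈ Θ, every c ∈ (0,1], and u uniformly distributed on the unit sphere S^{p−1} ⊂ ℝ^p, the simultaneous-perturbation gradient estimator satisfies ‖E[((μ(θ + cu) − μ(θ − cu))/(2c))·u] − (1/p)∇μ(θ)‖ ≤ K c², where ‖·‖ is the Euclidean norm. -/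
/-!
Rotation invariance forces the second-moment matrix `∫ u uᵀ dν` to be a multiple of the
identity: reflecting one coordinate kills the off-diagonal entries and transposing two
coordinates equalizes the diagonal ones. Its trace is `∫ ‖u‖² dν = 1`, so
`∫ ⟪w, u⟫ u dν = w / p`. Taking `w = ∇μ(θ)` turns the bias into the integral of
`((μ(θ + cu) − μ(θ − cu))/(2c) − Dμ(θ) u) • u`, and this symmetric difference quotient is
`Dμ(θ) u + O(c²)` because the second-order Taylor terms at `θ ± cu` cancel. The constant comes
from a bound on `D³μ` over the closed `1`-neighbourhood of `Θ`, which is compact.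
-/

open MeasureTheory Metric

section Taylor

variable {E F : Type*} [NormedAddCommGroup E] [NormedSpace ℝ E]
  [NormedAddCommGroup F] [NormedSpace ℝ F]

theorem norm_image_sub_sub_fderiv_le {h : E → F} (hh : ContDiff ℝ 2 h) {x y : E} {M : ℝ}
    (hM : ∀ z ∈ closedBall x ‖y - x‖, ‖iteratedFDeriv ℝ 2 h z‖ ≤ M) :
    ‖h y - h x - fderiv ℝ h x (y - x)‖ ≤ M * ‖y - x‖ ^ 2 := by
  have hconv : Convex ℝ (closedBall x ‖y - x‖) := convex_closedBall _ _
  have hx : x ∈ closedBall x ‖y - x‖ := mem_closedBall_self (norm_nonneg _)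
  have hy : y ∈ closedBall x ‖y - x‖ := by rw [mem_closedBall_iff_norm]
  have hM0 : 0 ≤ M := (norm_nonneg _).trans (hM x hx)
  have hD2h : ∀ z ∈ closedBall x ‖y - x‖, ‖fderiv ℝ (fderiv ℝ h) z‖ ≤ M := fun z hz => by
    rw [← norm_iteratedFDeriv_one, norm_iteratedFDeriv_fderiv]; exact hM z hz
  have hDh : ∀ z ∈ closedBall x ‖y - x‖, ‖fderiv ℝ h z - fderiv ℝ h x‖ ≤ M * ‖y - x‖ :=
    fun z hz => (hconv.norm_image_sub_le_of_norm_fderiv_le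
      (fun w _ => ((hh.fderiv_right le_rfl).differentiable one_ne_zero) w) hD2h hx hz).trans
      (mul_le_mul_of_nonneg_left (mem_closedBall_iff_norm.mp hz) hM0)
  calc ‖h y - h x - fderiv ℝ h x (y - x)‖ ≤ M * ‖y - x‖ * ‖y - x‖ :=
        hconv.norm_image_sub_le_of_norm_fderiv_le'
          (fun w _ => (hh.differentiable two_ne_zero) w) hDh hx hy
    _ = M * ‖y - x‖ ^ 2 := by ring

theorem norm_image_add_sub_image_sub_sub_fderiv_le {f : E → F} (hf : ContDiff ℝ 3 f) {θ v : E}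
    {M : ℝ} (hM : ∀ z ∈ closedBall θ ‖v‖, ‖iteratedFDeriv ℝ 3 f z‖ ≤ M) :
    ‖f (θ + v) - f (θ - v) - (2 : ℝ) • fderiv ℝ f θ v‖ ≤ 2 * M * ‖v‖ ^ 3 := by
  have hDf : ∀ w : E, ‖w‖ ≤ ‖v‖ →
      ‖fderiv ℝ f (θ + w) - fderiv ℝ f θ - fderiv ℝ (fderiv ℝ f) θ w‖ ≤ M * ‖v‖ ^ 2 := by
    intro w hw
    have hM0 : 0 ≤ M := (norm_nonneg _).trans (hM θ (mem_closedBall_self (norm_nonneg v)))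
    have h := norm_image_sub_sub_fderiv_le (hf.fderiv_right (m := 2) (by norm_num))
      (x := θ) (y := θ + w) (M := M) (fun z hz => by
        rw [norm_iteratedFDeriv_fderiv]
        exact hM z (closedBall_subset_closedBall (by rwa [add_sub_cancel_left]) hz))
    rw [add_sub_cancel_left] at h
    exact h.trans (by gcongr)
  have hG : ∀ w : E, HasFDerivAt (fun w => f (θ + w) - f (θ - w))
      (fderiv ℝ f (θ + w) + fderiv ℝ f (θ - w)) w := by
    intro w
    have hd : Differentiable ℝ f := hf.differentiable (by norm_num)
    have h1 := (hd (θ + w)).hasFDerivAt.comp w ((hasFDerivAt_id w).const_add θ)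
    have h2 := (hd (θ - w)).hasFDerivAt.comp w ((hasFDerivAt_id w).const_sub θ)
    have h := h1.sub h2
    rwa [ContinuousLinearMap.comp_id, ContinuousLinearMap.comp_neg, sub_neg_eq_add] at h
  have hbound : ∀ w ∈ closedBall (0 : E) ‖v‖,
      ‖fderiv ℝ f (θ + w) + fderiv ℝ f (θ - w) - (2 : ℝ) • fderiv ℝ f θ‖ ≤ 2 * M * ‖v‖ ^ 2 := by
    intro w hw
    rw [mem_closedBall_zero_iff] at hw
    have hsplit : fderiv ℝ f (θ + w) + fderiv ℝ f (θ - w) - (2 : ℝ) • fderiv ℝ f θ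
        = (fderiv ℝ f (θ + w) - fderiv ℝ f θ - fderiv ℝ (fderiv ℝ f) θ w)
          + (fderiv ℝ f (θ + -w) - fderiv ℝ f θ - fderiv ℝ (fderiv ℝ f) θ (-w)) := by
      rw [map_neg, ← sub_eq_add_neg, two_smul]; abel
    rw [hsplit]
    refine (norm_add_le _ _).trans ?_
    linarith [hDf w hw, hDf (-w) (by rwa [norm_neg])]
  have h := (convex_closedBall (0 : E) ‖v‖).norm_image_sub_le_of_norm_hasFDerivWithin_le'
    (fun w _ => (hG w).hasFDerivWithinAt) hbound (mem_closedBall_self (norm_nonneg v))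
    (by rw [mem_closedBall_zero_iff])
  simp only [add_zero, sub_zero, sub_self, FunLike.coe_smul, Pi.smul_apply] at h
  linarith [h]

theorem norm_symmetric_difference_quotient_sub_fderiv_le {f : E → F} (hf : ContDiff ℝ 3 f)
    {θ u : E} (hu : ‖u‖ = 1) {c M : ℝ} (hc : 0 < c)
    (hM : ∀ z ∈ closedBall θ c, ‖iteratedFDeriv ℝ 3 f z‖ ≤ M) :
    ‖(2 * c)⁻¹ • (f (θ + c • u) - f (θ - c • u)) - fderiv ℝ f θ u‖ ≤ M * c ^ 2 := by
  have hcu : ‖c • u‖ = c := by rw [norm_smul, hu, Real.norm_of_nonneg hc.le, mul_one]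
  have h := norm_image_add_sub_image_sub_sub_fderiv_le hf (v := c • u) (hcu ▸ hM)
  rw [hcu, map_smul, smul_smul] at h
  have hrw : (2 * c)⁻¹ • (f (θ + c • u) - f (θ - c • u)) - fderiv ℝ f θ u
      = (2 * c)⁻¹ • (f (θ + c • u) - f (θ - c • u) - (2 * c) • fderiv ℝ f θ u) := by
    rw [smul_sub _ (_ - _), smul_smul, inv_mul_cancel₀ (by positivity), one_smul]
  rw [hrw, norm_smul, Real.norm_of_nonneg (by positivity)]
  calc (2 * c)⁻¹ * ‖f (θ + c • u) - f (θ - c • u) - (2 * c) • fderiv ℝ f θ u‖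
      ≤ (2 * c)⁻¹ * (2 * M * c ^ 3) := by gcongr
    _ = M * c ^ 2 := by field_simp

end Taylor

theorem integrable_of_continuous_of_ae_norm_eq_one {E F : Type*} [NormedAddCommGroup E]
    [ProperSpace E] [MeasurableSpace E] [OpensMeasurableSpace E] [NormedAddCommGroup F]
    {ν : Measure E} [IsFiniteMeasure ν] (hν : ∀ᵐ u ∂ν, ‖u‖ = 1) {f : E → F}
    (hf : Continuous f) : Integrable f ν := by
  obtain ⟨C, hC⟩ := (isCompact_sphere (0 : E) 1).exists_bound_of_continuousOn hf.continuousOn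
  refine Integrable.mono' (integrable_const C) hf.aestronglyMeasurable ?_
  filter_upwards [hν] with u hu
  exact hC u (by rwa [mem_sphere_zero_iff_norm])

theorem integral_comp_linearIsometryEquiv_of_map_eq {E G : Type*} [NormedAddCommGroup E]
    [NormedSpace ℝ E] [MeasurableSpace E] [BorelSpace E] [NormedAddCommGroup G]
    [NormedSpace ℝ G] {ν : Measure E} (R : E ≃ₗᵢ[ℝ] E) (hR : Measure.map R ν = ν) (f : E → G) :
    ∫ u, f (R u) ∂ν = ∫ u, f u ∂ν :=
  MeasurePreserving.integral_comp ⟨R.continuous.measurable, hR⟩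
    R.toHomeomorph.measurableEmbedding f

section SecondMoments

variable {ι : Type*} [Fintype ι] {ν : Measure (EuclideanSpace ℝ ι)}

theorem integral_apply_mul_apply_eq_zero_of_ne
    (hinv : ∀ R : EuclideanSpace ℝ ι ≃ₗᵢ[ℝ] EuclideanSpace ℝ ι, Measure.map R ν = ν)
    {i j : ι} (hij : i ≠ j) : ∫ u, u i * u j ∂ν = 0 := by
  classical
  let R : EuclideanSpace ℝ ι ≃ₗᵢ[ℝ] EuclideanSpace ℝ ι := LinearIsometryEquiv.piLpCongrRight 2
    fun k => if k = i then LinearIsometryEquiv.neg ℝ else LinearIsometryEquiv.refl ℝ ℝ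
  have hR : ∀ u : EuclideanSpace ℝ ι, R u i * R u j = -(u i * u j) := fun u => by
    simp [R, LinearIsometryEquiv.piLpCongrRight_apply, hij.symm]
  have h := integral_comp_linearIsometryEquiv_of_map_eq R (hinv R) fun u => u i * u j
  simp only [hR, integral_neg] at h
  linarith

theorem integral_apply_mul_self_eq
    (hinv : ∀ R : EuclideanSpace ℝ ι ≃ₗᵢ[ℝ] EuclideanSpace ℝ ι, Measure.map R ν = ν)
    (i j : ι) : ∫ u, u i * u i ∂ν = ∫ u, u j * u j ∂ν := by
  classical
  let R : EuclideanSpace ℝ ι ≃ₗᵢ[ℝ] EuclideanSpace ℝ ι :=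
    LinearIsometryEquiv.piLpCongrLeft 2 ℝ ℝ (Equiv.swap i j)
  have hR : ∀ u : EuclideanSpace ℝ ι, R u j = u i := fun u => by
    simp [R, LinearIsometryEquiv.piLpCongrLeft_apply, Equiv.piCongrLeft'_apply]
  rw [← integral_comp_linearIsometryEquiv_of_map_eq R (hinv R) fun u => u j * u j]
  simp only [hR]

variable [IsProbabilityMeasure ν] (hν : ∀ᵐ u ∂ν, ‖u‖ = 1)
  (hinv : ∀ R : EuclideanSpace ℝ ι ≃ₗᵢ[ℝ] EuclideanSpace ℝ ι, Measure.map R ν = ν)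
include hν hinv

theorem integral_apply_mul_self_eq_inv_card (i : ι) :
    ∫ u, u i * u i ∂ν = (Fintype.card ι : ℝ)⁻¹ := by
  classical
  have hint : ∀ j : ι, Integrable (fun u : EuclideanSpace ℝ ι => u j * u j) ν := fun j =>
    integrable_of_continuous_of_ae_norm_eq_one hν (by fun_prop)
  have hsum : ∑ j, ∫ u, u j * u j ∂ν = 1 := by
    rw [← integral_finsetSum _ fun j _ => hint j]
    calc ∫ u, ∑ j, u j * u j ∂ν = ∫ _, (1 : ℝ) ∂ν := integral_congr_ae <| by
          filter_upwards [hν] with u hu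
          simpa [hu, sq] using (EuclideanSpace.real_norm_sq_eq u).symm
      _ = 1 := by simp
  simp only [integral_apply_mul_self_eq hinv _ i, Finset.sum_const, Finset.card_univ,
    nsmul_eq_mul] at hsum
  exact eq_inv_of_mul_eq_one_right hsum

theorem integral_inner_smul_eq_inv_card_smul (w : EuclideanSpace ℝ ι) :
    ∫ u, inner ℝ w u • u ∂ν = (Fintype.card ι : ℝ)⁻¹ • w := by
  classical
  have hint : Integrable (fun u : EuclideanSpace ℝ ι => inner ℝ w u • u) ν :=
    integrable_of_continuous_of_ae_norm_eq_one hν (by fun_prop)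
  have hmoment : ∀ j k : ι, ∫ u, u j * u k ∂ν = if j = k then (Fintype.card ι : ℝ)⁻¹ else 0 :=
    fun j k => by
      split_ifs with h
      · subst h; exact integral_apply_mul_self_eq_inv_card hν hinv j
      · exact integral_apply_mul_apply_eq_zero_of_ne hinv h
  ext k
  calc (∫ u, inner ℝ w u • u ∂ν) k = ∫ u, ∑ j, w j * (u j * u k) ∂ν := by
        rw [← PiLp.proj_apply (𝕜 := ℝ), ← ContinuousLinearMap.integral_comp_comm _ hint]
        congr 1 with u
        simp only [PiLp.proj_apply, PiLp.smul_apply, smul_eq_mul, PiLp.inner_apply,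
          RCLike.inner_apply, conj_trivial, Finset.sum_mul]
        exact Finset.sum_congr rfl fun j _ => by ring
    _ = ∑ j, w j * ∫ u, u j * u k ∂ν := by
        rw [integral_finsetSum _ fun j _ => (integrable_of_continuous_of_ae_norm_eq_one hν
          (by fun_prop)).const_mul (w j)]
        simp only [integral_const_mul]
    _ = ((Fintype.card ι : ℝ)⁻¹ • w) k := by simp [hmoment, mul_comm]

end SecondMoments

theorem spsa_gradient_estimator_bias_general (p : ℕ)
    (μ : EuclideanSpace ℝ (Fin p) → ℝ) (hμ : ContDiff ℝ 3 μ)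
    (Θ : Set (EuclideanSpace ℝ (Fin p))) (hΘ : IsCompact Θ)
    (ν : Measure (EuclideanSpace ℝ (Fin p))) [IsProbabilityMeasure ν]
    (hsupp : ν {x | ‖x‖ = 1}ᶜ = 0)
    (hinv : ∀ R : EuclideanSpace ℝ (Fin p) ≃ₗᵢ[ℝ] EuclideanSpace ℝ (Fin p),
      Measure.map R ν = ν) :
    ∃ K : ℝ, 0 < K ∧ ∀ θ ∈ Θ, ∀ c ∈ Set.Ioc (0 : ℝ) 1,
      ‖(∫ u, ((μ (θ + c • u) - μ (θ - c • u)) / (2 * c)) • u ∂ν) -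
          (1 / (p : ℝ)) • gradient μ θ‖ ≤ K * c ^ 2 := by
  have hν : ∀ᵐ u ∂ν, ‖u‖ = 1 := ae_iff.mpr hsupp
  obtain ⟨C, hC⟩ := (hΘ.cthickening (r := 1)).exists_bound_of_continuousOn
    (hμ.continuous_iteratedFDeriv le_rfl).continuousOn
  refine ⟨max C 1, by positivity, fun θ hθ c ⟨hc0, hc1⟩ => ?_⟩
  have hM : ∀ z ∈ closedBall θ c, ‖iteratedFDeriv ℝ 3 μ z‖ ≤ max C 1 := fun z hz =>
    (hC z (closedBall_subset_cthickening hθ 1 (closedBall_subset_closedBall hc1 hz))).trans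
      (le_max_left _ _)
  have hμc := hμ.continuous
  have hmoment := integral_inner_smul_eq_inv_card_smul hν hinv (gradient μ θ)
  rw [Fintype.card_fin] at hmoment
  rw [one_div, ← hmoment, ← integral_sub (integrable_of_continuous_of_ae_norm_eq_one hν
    (by fun_prop)) (integrable_of_continuous_of_ae_norm_eq_one hν (by fun_prop))]
  refine (norm_integral_le_of_norm_le_const (C := max C 1 * c ^ 2) ?_).trans (by simp)
  filter_upwards [hν] with u hu
  rw [← sub_smul, norm_smul, hu, mul_one, inner_gradient_left, div_eq_inv_mul, ← smul_eq_mul]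
  exact norm_symmetric_difference_quotient_sub_fderiv_le hμ hu hc0 hM

/-- If `μ : ℝ^p → ℝ` is three times continuously differentiable and
`Θ ⊂ ℝ^p` is compact, then there is a constant `K > 0` such that for every `θ ∈ Θ`,
every `c ∈ (0,1]` and `u` uniformly distributed on the unit sphere (i.e. with law the
rotation-invariant probability measure `ν` concentrated on the unit sphere), the
simultaneous-perturbation gradient estimator satisfies
`‖E[((μ(θ+cu) − μ(θ−cu))/(2c))·u] − (1/p)∇μ(θ)‖ ≤ K c²`. -/
theorem spsa_gradient_estimator_bias (p : ℕ) (hp : 1 ≤ p)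
    (μ : EuclideanSpace ℝ (Fin p) → ℝ) (hμ : ContDiff ℝ 3 μ)
    (Θ : Set (EuclideanSpace ℝ (Fin p))) (hΘ : IsCompact Θ)
    (ν : Measure (EuclideanSpace ℝ (Fin p))) [IsProbabilityMeasure ν]
    (hsupp : ν {x | ‖x‖ = 1}ᶜ = 0)
    (hinv : ∀ R : EuclideanSpace ℝ (Fin p) ≃ₗᵢ[ℝ] EuclideanSpace ℝ (Fin p),
      Measure.map R ν = ν) :
    ∃ K : ℝ, 0 < K ∧ ∀ θ ∈ Θ, ∀ c ∈ Set.Ioc (0 : ℝ) 1,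
      ‖(∫ u, ((μ (θ + c • u) - μ (θ - c • u)) / (2 * c)) • u ∂ν) -
          (1 / (p : ℝ)) • gradient μ θ‖ ≤ K * c ^ 2 :=
  spsa_gradient_estimator_bias_general p μ hμ Θ hΘ ν hsupp hinv
end
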